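/- arXiv:1309.4820 — 2 statements merged into one kernel-verified Lean document; each statement's English description precedes it below -/
import Mathlib

section
/- Let r, u0 be real numbers with |r| < 1. Define u : ℕ → ℕ → ℝ by u(0,0) = u0, u(i,0) = 0 for i ≥ 1, u(0,n+1) = u0 + r·u(0,n), and for i ≥ 1, u(i,n+1) = r·u(i,n) + r·Σ_{j=0}^{i−1} u(j,n)·u(i−1−j,n). Then for every i ≥ 0, the sequence n ↦ u(i,n) converges as n → ∞, and its limit equals C(i)·u0^(i+1)·r^i/(1−r)^(2i+1), where C(i) = (2i)!/(i!·(i+1)!) is the i-th Catalan number. -/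
open Filter

lemma rec_zero (r : ℝ) (hr : |r| < 1) (y e : ℕ → ℝ)
    (hy : ∀ n, y (n + 1) = r * y n + e n)
    (he : Tendsto e atTop (nhds 0)) : Tendsto y atTop (nhds 0) := by
  rw [Metric.tendsto_atTop] at he ⊢
  intro ε hε
  have h1r : 0 < 1 - |r| := by linarith
  obtain ⟨N, hN⟩ := he (ε * (1 - |r|) / 2) (by positivity)
  have key : ∀ m, |y (N + m)| ≤ |r| ^ m * |y N| + ε / 2 := by
    intro m
    induction m with
    | zero => simp; linarith
    | succ m ih =>
      have hb : |e (N + m)| ≤ ε * (1 - |r|) / 2 := by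
        have := hN (N + m) (Nat.le_add_right _ _)
        rw [Real.dist_eq, sub_zero] at this
        linarith
      have hE : y (N + (m + 1)) = r * y (N + m) + e (N + m) := hy (N + m)
      have h1 : |y (N + (m + 1))| ≤ |r| * |y (N + m)| + |e (N + m)| := by
        rw [hE]
        calc |r * y (N + m) + e (N + m)| ≤ |r * y (N + m)| + |e (N + m)| := abs_add_le _ _
          _ = |r| * |y (N + m)| + |e (N + m)| := by rw [abs_mul]
      have hr0 : 0 ≤ |r| := abs_nonneg r
      have hmul : |r| * (|r| ^ m * |y N|) = |r| ^ (m + 1) * |y N| := by ring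
      have h2 := mul_le_mul_of_nonneg_left ih hr0
      nlinarith [abs_nonneg (y N)]
  have hpow : Tendsto (fun m => |r| ^ m * |y N|) atTop (nhds 0) := by
    have h0 : Tendsto (fun m : ℕ => |r| ^ m) atTop (nhds 0) :=
      tendsto_pow_atTop_nhds_zero_of_abs_lt_one (by rwa [abs_abs])
    simpa using h0.mul_const (|y N|)
  rw [Metric.tendsto_atTop] at hpow
  obtain ⟨M, hM⟩ := hpow (ε / 2) (by positivity)
  refine ⟨N + M, fun n hn => ?_⟩
  have hnN : N ≤ n := le_trans (Nat.le_add_right _ _) hn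
  have hrep : n = N + (n - N) := by omega
  have hMle : M ≤ n - N := by omega
  have h2 := hM (n - N) hMle
  rw [Real.dist_eq, sub_zero, abs_of_nonneg (by positivity)] at h2
  rw [Real.dist_eq, sub_zero]
  have h3 := key (n - N)
  rw [← hrep] at h3
  linarith

lemma rec_lim (r : ℝ) (hr : |r| < 1) (x b : ℕ → ℝ) (B : ℝ)
    (hx : ∀ n, x (n + 1) = r * x n + b n)
    (hb : Tendsto b atTop (nhds B)) :
    Tendsto x atTop (nhds (B / (1 - r))) := by
  have h1 : (1 : ℝ) - r ≠ 0 := by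
    have := abs_lt.mp hr; intro h; linarith
  have hy : ∀ n, (x (n + 1) - B / (1 - r)) = r * (x n - B / (1 - r)) + (b n - B) := by
    intro n; rw [hx n]; field_simp; ring
  have he : Tendsto (fun n => b n - B) atTop (nhds 0) := by
    simpa using hb.sub_const B
  have h2 := rec_zero r hr (fun n => x n - B / (1 - r)) (fun n => b n - B) hy he
  have h3 := h2.add_const (B / (1 - r))
  simpa using h3

theorem stmt_3 (r u0 : ℝ) (hr : |r| < 1)
    (u : ℕ → ℕ → ℝ)
    (h00 : u 0 0 = u0)
    (hi0 : ∀ i : ℕ, 1 ≤ i → u i 0 = 0)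
    (h0s : ∀ n : ℕ, u 0 (n + 1) = u0 + r * u 0 n)
    (his : ∀ i : ℕ, 1 ≤ i → ∀ n : ℕ,
      u i (n + 1) = r * u i n + r * ∑ j ∈ Finset.range i, u j n * u (i - 1 - j) n) :
    ∀ i : ℕ, Filter.Tendsto (fun n => u i n) Filter.atTop
      (nhds (((Nat.choose (2 * i) i : ℝ) / (i + 1)) * u0 ^ (i + 1) * r ^ i /
        (1 - r) ^ (2 * i + 1))) := by
  have h1 : (1 : ℝ) - r ≠ 0 := by
    have := abs_lt.mp hr; intro h; linarith
  have main : ∀ i, Tendsto (fun n => u i n) atTop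
      (nhds ((catalan i : ℝ) * u0 ^ (i + 1) * r ^ i / (1 - r) ^ (2 * i + 1))) := by
    intro i
    induction i using Nat.strong_induction_on with
    | _ i IH =>
      match i with
      | 0 =>
        have := rec_lim r hr (u 0) (fun _ => u0) u0
          (fun n => by rw [h0s n]; ring) tendsto_const_nhds
        simpa [catalan_zero] using this
      | (k + 1) =>
        set L : ℕ → ℝ := fun j => (catalan j : ℝ) * u0 ^ (j + 1) * r ^ j / (1 - r) ^ (2 * j + 1) with hL
        have hb : Tendsto (fun n => r * ∑ j ∈ Finset.range (k + 1), u j n * u (k - j) n)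
            atTop (nhds (r * ∑ j ∈ Finset.range (k + 1), L j * L (k - j))) := by
          apply Tendsto.const_mul
          apply tendsto_finset_sum
          intro j hj
          exact (IH j (by simp at hj; omega)).mul (IH (k - j) (by omega))
        have hx : ∀ n, u (k + 1) (n + 1) = r * u (k + 1) n +
            r * ∑ j ∈ Finset.range (k + 1), u j n * u (k - j) n := by
          intro n
          have := his (k + 1) (by omega) n
          simpa using this
        have hlim := rec_lim r hr (u (k + 1)) _ _ hx hb
        convert hlim using 2
        have hsum : ∑ j ∈ Finset.range (k + 1), L j * L (k - j) =
            (catalan (k + 1) : ℝ) * u0 ^ (k + 2) * r ^ k / (1 - r) ^ (2 * k + 2) := by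
          have hterm : ∀ j ∈ Finset.range (k + 1), L j * L (k - j) =
              ((catalan j * catalan (k - j) : ℕ) : ℝ) *
                (u0 ^ (k + 2) * r ^ k / (1 - r) ^ (2 * k + 2)) := by
            intro j hj
            simp only [Finset.mem_range] at hj
            obtain ⟨m, rfl⟩ : ∃ m, k = j + m := ⟨k - j, by omega⟩
            have hm : j + m - j = m := by omega
            rw [hL]
            simp only [hm]
            push_cast
            field_simp
            ring
          have hcat : (catalan (k + 1) : ℕ) =
              ∑ j ∈ Finset.range (k + 1), catalan j * catalan (k - j) := by
            rw [catalan_succ]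
            exact Fin.sum_univ_eq_sum_range (fun j => catalan j * catalan (k - j)) (k + 1)
          rw [Finset.sum_congr rfl hterm, ← Finset.sum_mul, ← Nat.cast_sum, ← hcat]
          ring
        rw [hsum]
        field_simp
        ring
  intro i
  have hc : ((Nat.choose (2 * i) i : ℝ) / (i + 1)) = (catalan i : ℝ) := by
    have h := succ_mul_catalan_eq_centralBinom i
    have h2 : ((2 * i).choose i : ℝ) = (i + 1) * catalan i := by
      rw [← Nat.centralBinom, ← h]; push_cast; ring
    rw [h2]
    field_simp
  rw [hc]
  exact main i
end

section
/- Let Z ≥ 1 be a natural number and let r, ε, u0 be real numbers with 0 ≤ r < 1, ε ≥ 0, u0 ≥ 0. Set θ = r·ε·u0^Z/(1−r)^(Z+1) and assume θ ≤ Z^Z/(Z+1)^(Z+1). Define U = (u0/(1−r))·Σ_{i=0}^{∞} C(i,Z)·θ^i (the sum taken as a tsum), where C(i,Z) = binomial((Z+1)·i, i)/(Z·i + 1). Then U satisfies the fixed-point equation U = u0 + r·(1 + ε·U^Z)·U. -/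
/-!
Let `B(x) = ∑ C(i,Z) xⁱ`. Once `B = 1 + x B^(Z+1)` is known at `x = θ ∈ [0, θ_max]`, the
value `U = u0 B(θ) / (1 - r)` satisfies the fixed-point equation by algebra.

Near `0` the functional equation is Lagrange inversion in the form
`(1 - t) B(t (1 - t)^Z) = 1`. Expanding `(1 - t)^(Z i + 1)`, the coefficient of `tⁿ` (`n ≥ 1`)
becomes `(1/n) ∑ᵢ (-1)^(n-i) (n choose i) ((Z+1) i choose (n-1))`: an `n`-th forward difference
of a polynomial in `i` of degree `n - 1`, hence zero. The points `t (1 - t)^Z` accumulate at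
`0`, so the identity theorem extends the equation to the disc of convergence `|x| < θ_max`; the
radius comes from `C(i,Z) θ_maxⁱ ≤ 1`, a single term of the binomial expansion of
`(Z + 1)^((Z+1) i)`.

At the endpoint: if `B` took the value `L = (Z+1)/Z` at some `x ∈ [0, θ_max)`, the equation
would force `x = (L - 1)/L^(Z+1) = θ_max`; so by the intermediate value theorem `B ≤ L` on
`[0, θ_max)`. This bounds the partial sums at `θ_max`, so the series converges there, uniformly
on `[0, θ_max]`, and the equation passes to the limit.
-/

open Finset Polynomial

theorem Polynomial.sum_range_alternating_choose_mul_eval_eq_zero {R : Type*} [CommRing R]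
    {P : R[X]} {n : ℕ} (hP : P.natDegree < n) :
    ∑ k ∈ range (n + 1), (-1 : R) ^ (n - k) * n.choose k * P.eval (k : R) = 0 := by
  have h := congrFun (fwdDiff_iter_eq_zero_of_degree_lt hP) 0
  rw [fwdDiff_iter_eq_sum_shift] at h
  simpa [zsmul_eq_mul] using h

theorem Nat.succ_mul_add_choose_mul_choose {c i m : ℕ} (hi : i ≤ m + 1) :
    (m + 1) * (c + i).choose i * (c + 1).choose (m + 1 - i)
      = (c + 1) * (m + 1).choose i * (c + i).choose m := by
  rcases lt_or_ge (c + i) m with hlt | hle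
  · rw [Nat.choose_eq_zero_of_lt (by omega : c + 1 < m + 1 - i), Nat.choose_eq_zero_of_lt hlt]
    simp
  · have hmul := Nat.choose_mul (n := c + i + 1) hi
    have h1 := Nat.choose_mul_succ_eq (c + i) i
    have h2 := Nat.add_one_mul_choose_eq (c + i) m
    rw [show c + i + 1 - i = c + 1 by omega] at hmul h1
    apply Nat.eq_of_mul_eq_mul_left (by omega : 0 < c + i + 1)
    calc (c + i + 1) * ((m + 1) * (c + i).choose i * (c + 1).choose (m + 1 - i))
        = (m + 1) * ((c + i).choose i * (c + i + 1)) * (c + 1).choose (m + 1 - i) := by ring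
      _ = (m + 1) * (c + 1) * ((c + i + 1).choose (m + 1) * (m + 1).choose i) := by
          rw [h1, hmul]; ring
      _ = (c + 1) * (m + 1).choose i * ((c + i + 1) * (c + i).choose m) := by rw [h2]; ring
      _ = (c + i + 1) * ((c + 1) * (m + 1).choose i * (c + i).choose m) := by ring

noncomputable def fussCatalan (Z i : ℕ) : ℝ := ((Z + 1) * i).choose i / ((Z : ℝ) * i + 1)

theorem fussCatalan_nonneg (Z i : ℕ) : 0 ≤ fussCatalan Z i := by
  unfold fussCatalan; positivity

theorem succ_mul_fussCatalan_mul_choose (Z : ℕ) {i m : ℕ} (hi : i ≤ m + 1) :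
    (m + 1) * fussCatalan Z i * (Z * i + 1).choose (m + 1 - i)
      = (m + 1).choose i * ((Z + 1) * i).choose m := by
  have h := Nat.succ_mul_add_choose_mul_choose (c := Z * i) hi
  rw [show Z * i + i = (Z + 1) * i by ring] at h
  have h' : ((m + 1 : ℕ) : ℝ) * ((Z + 1) * i).choose i * (Z * i + 1).choose (m + 1 - i)
      = ((Z * i + 1 : ℕ) : ℝ) * (m + 1).choose i * ((Z + 1) * i).choose m := by
    exact_mod_cast h
  unfold fussCatalan
  push_cast at h' ⊢
  field_simp
  linear_combination h'

theorem sum_alternating_fussCatalan_mul_choose_eq_zero (Z m : ℕ) :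
    ∑ i ∈ range (m + 2),
      (-1 : ℝ) ^ (m + 1 - i) * fussCatalan Z i * (Z * i + 1).choose (m + 1 - i) = 0 := by
  set P : ℝ[X] := (descPochhammer ℝ m).comp (C ((Z : ℝ) + 1) * X)
  have hP : P.natDegree < m + 1 := by
    calc P.natDegree ≤ (descPochhammer ℝ m).natDegree * (C ((Z : ℝ) + 1) * X).natDegree :=
          natDegree_comp_le
      _ < m + 1 := by
          rw [descPochhammer_natDegree, natDegree_C_mul_X _ (by positivity)]; omega
  have hterm : ∀ i ∈ range (m + 2),
      ((m + 1).factorial : ℝ)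
          * ((-1 : ℝ) ^ (m + 1 - i) * fussCatalan Z i * (Z * i + 1).choose (m + 1 - i))
        = (-1 : ℝ) ^ (m + 1 - i) * (m + 1).choose i * P.eval (i : ℝ) := by
    intro i hi
    have hev : P.eval (i : ℝ) = m.factorial * ((Z + 1) * i).choose m := by
      have := descPochhammer_eval_eq_descFactorial ℝ ((Z + 1) * i) m
      rw [Nat.descFactorial_eq_factorial_mul_choose] at this
      push_cast at this
      simp [P, eval_comp, this]
    rw [hev, Nat.factorial_succ]
    push_cast
    linear_combination (-1 : ℝ) ^ (m + 1 - i) * m.factorial *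
      succ_mul_fussCatalan_mul_choose Z (Nat.lt_succ_iff.mp (mem_range.mp hi))
  have := Polynomial.sum_range_alternating_choose_mul_eval_eq_zero hP
  rw [← Finset.sum_congr rfl hterm, ← Finset.mul_sum] at this
  exact (mul_eq_zero.mp this).resolve_left (by positivity)

theorem Nat.choose_mul_pow_le_add_one_pow (a b x : ℕ) :
    (a + b).choose b * x ^ a ≤ (x + 1) ^ (a + b) := by
  rw [← Nat.choose_symm_add, add_pow]
  calc (a + b).choose a * x ^ a = x ^ a * 1 ^ (a + b - a) * (a + b).choose a := by ring
    _ ≤ _ := Finset.single_le_sum (f := fun j => x ^ j * 1 ^ (a + b - j) * (a + b).choose j)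
        (fun j _ => Nat.zero_le _) (by simp)

noncomputable def fussCatalanRadius (Z : ℕ) : ℝ := (Z : ℝ) ^ Z / ((Z : ℝ) + 1) ^ (Z + 1)

noncomputable def fussCatalanSeries (Z : ℕ) (x : ℝ) : ℝ := ∑' i, fussCatalan Z i * x ^ i

section Radius

variable (Z : ℕ)

theorem fussCatalanRadius_pos : 0 < fussCatalanRadius Z := by
  unfold fussCatalanRadius
  rcases Nat.eq_zero_or_pos Z with rfl | hZ
  · norm_num
  · positivity

theorem fussCatalan_mul_radius_pow_le_one (i : ℕ) :
    fussCatalan Z i * fussCatalanRadius Z ^ i ≤ 1 := by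
  have hchoose :
      (((Z + 1) * i).choose i : ℝ) * (Z : ℝ) ^ (Z * i) ≤ ((Z : ℝ) + 1) ^ ((Z + 1) * i) := by
    have := Nat.choose_mul_pow_le_add_one_pow (Z * i) i Z
    rw [show Z * i + i = (Z + 1) * i by ring] at this
    exact_mod_cast this
  have hle : fussCatalan Z i ≤ ((Z + 1) * i).choose i :=
    div_le_self (by positivity) (by nlinarith [show (0 : ℝ) ≤ Z * i by positivity])
  calc fussCatalan Z i * fussCatalanRadius Z ^ i
      ≤ ((Z + 1) * i).choose i * fussCatalanRadius Z ^ i := by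
        gcongr; exact pow_nonneg (fussCatalanRadius_pos Z).le i
    _ = ((Z + 1) * i).choose i * (Z : ℝ) ^ (Z * i) / ((Z : ℝ) + 1) ^ ((Z + 1) * i) := by
        rw [fussCatalanRadius, div_pow, ← pow_mul, ← pow_mul, mul_div_assoc]
    _ ≤ 1 := div_le_one_of_le₀ hchoose (by positivity)

theorem summable_fussCatalan_mul_pow {x : ℝ} (hx : |x| < fussCatalanRadius Z) :
    Summable (fun i => fussCatalan Z i * x ^ i) := by
  have hρ := fussCatalanRadius_pos Z
  refine Summable.of_norm_bounded (summable_geometric_of_lt_one (by positivity)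
    ((div_lt_one hρ).mpr hx)) fun i => ?_
  calc ‖fussCatalan Z i * x ^ i‖
        = (fussCatalan Z i * fussCatalanRadius Z ^ i) * (|x| / fussCatalanRadius Z) ^ i := by
        rw [Real.norm_eq_abs, abs_mul, abs_pow, abs_of_nonneg (fussCatalan_nonneg Z i), div_pow]
        field_simp
    _ ≤ (|x| / fussCatalanRadius Z) ^ i :=
        mul_le_of_le_one_left (by positivity) (fussCatalan_mul_radius_pow_le_one Z i)

theorem analyticOnNhd_fussCatalanSeries :
    AnalyticOnNhd ℝ (fussCatalanSeries Z) (Metric.ball 0 (fussCatalanRadius Z)) := by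
  set p := FormalMultilinearSeries.ofScalars ℝ (fussCatalan Z)
  have hρ := fussCatalanRadius_pos Z
  have hrad : ((fussCatalanRadius Z).toNNReal : ENNReal) ≤ p.radius := by
    refine p.le_radius_of_bound 1 fun n => ?_
    rw [FormalMultilinearSeries.ofScalars_norm, Real.norm_eq_abs,
      abs_of_nonneg (fussCatalan_nonneg Z n), Real.coe_toNNReal _ hρ.le]
    exact fussCatalan_mul_radius_pow_le_one Z n
  have hsum : p.sum = fussCatalanSeries Z := funext fun x =>
    (FormalMultilinearSeries.ofScalars_sum_eq _ x).trans (by simp [fussCatalanSeries])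
  have := (p.hasFPowerSeriesOnBall (lt_of_lt_of_le (by simpa using hρ) hrad)).analyticOnNhd
  rw [hsum] at this
  refine this.mono ?_
  rw [← Real.coe_toNNReal _ hρ.le, ← Metric.eball_coe]
  exact Metric.eball_subset_eball hrad

end Radius

theorem hasSum_choose_mul_pow {R : Type*} [CommSemiring R] [TopologicalSpace R] (N : ℕ)
    (u : R) : HasSum (fun j => (N.choose j : R) * u ^ j) ((1 + u) ^ N) := by
  have h := hasSum_sum_of_ne_finset_zero (L := SummationFilter.unconditional ℕ)
    (s := range (N + 1)) (f := fun j => (N.choose j : R) * u ^ j)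
    (fun j hj => by simp [Nat.choose_eq_zero_of_lt (by simpa using hj : N < j)])
  rwa [show ∑ j ∈ range (N + 1), (N.choose j : R) * u ^ j = (1 + u) ^ N by
    rw [add_comm 1 u, add_pow]; simp [mul_comm]] at h

theorem tsum_eq_tsum_sum_antidiagonal {A α : Type*} [AddCommMonoid A] [Finset.HasAntidiagonal A]
    [AddCommMonoid α] [TopologicalSpace α] [ContinuousAdd α] [T3Space α] {F : A × A → α}
    (hF : Summable F) : ∑' p, F p = ∑' n, ∑ p ∈ antidiagonal n, F p := by
  rw [← Finset.HasAntidiagonal.sigmaAntidiagonalEquivProd.tsum_eq F]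
  refine (Summable.tsum_sigma' (fun n => (hasSum_fintype _).summable)
    (Finset.HasAntidiagonal.sigmaAntidiagonalEquivProd.summable_iff.mpr hF)).trans ?_
  simp [tsum_fintype, Finset.sum_attach]

section Lagrange

variable (Z : ℕ)

theorem one_sub_mul_fussCatalanSeries {t : ℝ} (ht : 0 ≤ t)
    (hsmall : t * (1 + t) ^ Z < fussCatalanRadius Z) :
    (1 - t) * fussCatalanSeries Z (t * (1 - t) ^ Z) = 1 := by
  have hrow : ∀ (s u : ℝ) (i : ℕ),
      HasSum (fun j => fussCatalan Z i * s ^ i * ((Z * i + 1).choose j * u ^ j))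
        ((1 + u) * (fussCatalan Z i * (s * (1 + u) ^ Z) ^ i)) := fun s u i => by
    have h := (hasSum_choose_mul_pow (Z * i + 1) u).mul_left (fussCatalan Z i * s ^ i)
    rwa [show fussCatalan Z i * s ^ i * (1 + u) ^ (Z * i + 1)
      = (1 + u) * (fussCatalan Z i * (s * (1 + u) ^ Z) ^ i) by ring] at h
  set F : ℕ × ℕ → ℝ :=
    fun p => fussCatalan Z p.1 * t ^ p.1 * ((Z * p.1 + 1).choose p.2 * (-t) ^ p.2)
  have hF : Summable F := by
    refine Summable.of_norm ?_
    have hnorm : (fun p => ‖F p‖)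
        = fun p => fussCatalan Z p.1 * t ^ p.1 * ((Z * p.1 + 1).choose p.2 * t ^ p.2) := by
      ext p
      simp [F, abs_of_nonneg (fussCatalan_nonneg Z p.1), abs_of_nonneg ht]
    rw [hnorm, summable_prod_of_nonneg (fun p => by have := fussCatalan_nonneg Z p.1; positivity)]
    refine ⟨fun i => (hrow t t i).summable, ?_⟩
    simp_rw [fun i => (hrow t t i).tsum_eq]
    exact (summable_fussCatalan_mul_pow Z
      (by rwa [abs_of_nonneg (by positivity)])).mul_left _
  have hrows : ∑' p, F p = (1 - t) * fussCatalanSeries Z (t * (1 - t) ^ Z) := by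
    rw [hF.tsum_prod' fun i => (hrow t (-t) i).summable, fussCatalanSeries, ← tsum_mul_left]
    exact tsum_congr fun i => by simpa [sub_eq_add_neg] using (hrow t (-t) i).tsum_eq
  have hdiag : ∀ n, ∑ p ∈ antidiagonal n, F p = if n = 0 then 1 else 0 := by
    rintro (_ | m)
    · simp [F, fussCatalan]
    · rw [Finset.Nat.sum_antidiagonal_eq_sum_range_succ_mk, if_neg m.succ_ne_zero]
      calc ∑ k ∈ range (m + 2), F (k, m + 1 - k)
          = (∑ k ∈ range (m + 2), (-1 : ℝ) ^ (m + 1 - k) * fussCatalan Z k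
              * (Z * k + 1).choose (m + 1 - k)) * t ^ (m + 1) := by
            rw [Finset.sum_mul]
            refine Finset.sum_congr rfl fun k hk => ?_
            have : t ^ k * t ^ (m + 1 - k) = t ^ (m + 1) := by
              rw [← pow_add, Nat.add_sub_cancel' (Nat.lt_succ_iff.mp (mem_range.mp hk))]
            rw [neg_pow]
            linear_combination (-1 : ℝ) ^ (m + 1 - k) * fussCatalan Z k
              * (Z * k + 1).choose (m + 1 - k) * this
        _ = 0 := by rw [sum_alternating_fussCatalan_mul_choose_eq_zero, zero_mul]
  rw [← hrows, tsum_eq_tsum_sum_antidiagonal hF, tsum_congr hdiag, tsum_ite_eq]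

end Lagrange

section FunctionalEquation

open Filter Topology

variable (Z : ℕ)

theorem fussCatalanSeries_zero : fussCatalanSeries Z 0 = 1 := by
  rw [fussCatalanSeries, tsum_eq_single 0 fun i hi => by simp [hi]]
  simp [fussCatalan]

theorem frequently_fussCatalanSeries_eq_one_add_mul_pow :
    ∃ᶠ x in 𝓝[≠] (0 : ℝ),
      fussCatalanSeries Z x = 1 + x * fussCatalanSeries Z x ^ (Z + 1) := by
  have hφ : Tendsto (fun t : ℝ => t * (1 - t) ^ Z) (𝓝[>] 0) (𝓝[≠] 0) := by
    refine tendsto_nhdsWithin_of_tendsto_nhds_of_eventually_within _ ?_ ?_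
    · simpa using ((by fun_prop : Continuous fun t : ℝ => t * (1 - t) ^ Z).tendsto 0).mono_left
        nhdsWithin_le_nhds
    · filter_upwards [Ioo_mem_nhdsGT one_pos] with t ht
      exact mul_ne_zero ht.1.ne' (pow_ne_zero _ (sub_ne_zero.mpr ht.2.ne'))
  have hsmall : ∀ᶠ t in 𝓝[>] (0 : ℝ), t * (1 + t) ^ Z < fussCatalanRadius Z :=
    eventually_nhdsWithin_of_eventually_nhds <| Tendsto.eventually_lt_const
      (by simpa using fussCatalanRadius_pos Z)
      ((by fun_prop : Continuous fun t : ℝ => t * (1 + t) ^ Z).tendsto 0)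
  refine hφ.frequently (Eventually.frequently ?_)
  filter_upwards [self_mem_nhdsWithin, hsmall] with t ht hts
  have hG := one_sub_mul_fussCatalanSeries Z (le_of_lt ht) hts
  have hGZ : (1 - t) ^ Z * fussCatalanSeries Z (t * (1 - t) ^ Z) ^ Z = 1 := by
    rw [← mul_pow, hG, one_pow]
  linear_combination hG - t * fussCatalanSeries Z (t * (1 - t) ^ Z) * hGZ

theorem fussCatalanSeries_eq_one_add_mul_pow_of_abs_lt {x : ℝ} (hx : |x| < fussCatalanRadius Z) :
    fussCatalanSeries Z x = 1 + x * fussCatalanSeries Z x ^ (Z + 1) := by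
  have hf := analyticOnNhd_fussCatalanSeries Z
  refine hf.eqOn_of_preconnected_of_frequently_eq
    (analyticOnNhd_const.add (analyticOnNhd_id.mul (hf.pow _)))
    (convex_ball 0 _).isPreconnected (Metric.mem_ball_self (fussCatalanRadius_pos Z))
    (frequently_fussCatalanSeries_eq_one_add_mul_pow Z) ?_
  rwa [mem_ball_zero_iff, Real.norm_eq_abs]

end FunctionalEquation

section Boundary

open Filter Topology

variable {Z : ℕ}

theorem fussCatalanRadius_mul_pow (hZ : 0 < Z) :
    fussCatalanRadius Z * (((Z : ℝ) + 1) / Z) ^ (Z + 1) = ((Z : ℝ) + 1) / Z - 1 := by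
  have : (Z : ℝ) ≠ 0 := by positivity
  rw [fussCatalanRadius, div_pow, pow_succ (Z : ℝ)]
  field_simp
  ring

theorem fussCatalanSeries_le (hZ : 0 < Z) {x : ℝ} (hx0 : 0 ≤ x) (hx : x < fussCatalanRadius Z) :
    fussCatalanSeries Z x ≤ ((Z : ℝ) + 1) / Z := by
  by_contra! hlt
  have hball : Set.Icc 0 x ⊆ Metric.ball 0 (fussCatalanRadius Z) := fun y hy => by
    rw [mem_ball_zero_iff, Real.norm_eq_abs, abs_of_nonneg hy.1]; exact hy.2.trans_lt hx
  have hone : 1 ≤ ((Z : ℝ) + 1) / Z := by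
    rw [le_div_iff₀ (by positivity)]; linarith
  obtain ⟨y, hy, hGy⟩ := intermediate_value_Icc hx0
    ((analyticOnNhd_fussCatalanSeries Z).continuousOn.mono hball)
    ⟨(fussCatalanSeries_zero Z).trans_le hone, hlt.le⟩
  have heq := fussCatalanSeries_eq_one_add_mul_pow_of_abs_lt Z
    (by simpa [Real.norm_eq_abs] using hball hy)
  rw [hGy] at heq
  have : y = fussCatalanRadius Z :=
    mul_right_cancel₀ (pow_ne_zero (Z + 1) (by positivity : ((Z : ℝ) + 1) / Z ≠ 0))
      (by linarith [fussCatalanRadius_mul_pow hZ])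
  linarith [hy.2]

theorem summable_fussCatalan_mul_radius_pow (hZ : 0 < Z) :
    Summable fun i => fussCatalan Z i * fussCatalanRadius Z ^ i := by
  have hρ := fussCatalanRadius_pos Z
  refine summable_of_sum_range_le (fun i => by have := fussCatalan_nonneg Z i; positivity)
    fun N => le_of_tendsto (((by fun_prop : Continuous fun x : ℝ =>
      ∑ i ∈ range N, fussCatalan Z i * x ^ i).tendsto _).mono_left nhdsWithin_le_nhds)
      (?_ : ∀ᶠ x in 𝓝[<] fussCatalanRadius Z, _ ≤ ((Z : ℝ) + 1) / Z)
  filter_upwards [Ioo_mem_nhdsLT hρ] with x hx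
  calc ∑ i ∈ range N, fussCatalan Z i * x ^ i ≤ fussCatalanSeries Z x :=
        (summable_fussCatalan_mul_pow Z (by rw [abs_of_pos hx.1]; exact hx.2)).sum_le_tsum _
          fun i _ => by have := fussCatalan_nonneg Z i; have := hx.1; positivity
    _ ≤ _ := fussCatalanSeries_le hZ hx.1.le hx.2

theorem continuousOn_fussCatalanSeries (hZ : 0 < Z) :
    ContinuousOn (fussCatalanSeries Z) (Set.Icc 0 (fussCatalanRadius Z)) :=
  continuousOn_tsum (fun i => by fun_prop) (summable_fussCatalan_mul_radius_pow hZ)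
    fun i x hx => by
      rw [Real.norm_eq_abs, abs_mul, abs_pow, abs_of_nonneg (fussCatalan_nonneg Z i),
        abs_of_nonneg hx.1]
      exact mul_le_mul_of_nonneg_left (pow_le_pow_left₀ hx.1 hx.2 i) (fussCatalan_nonneg Z i)

theorem fussCatalanSeries_eq_one_add_mul_pow (hZ : 0 < Z) {x : ℝ} (hx0 : 0 ≤ x)
    (hx : x ≤ fussCatalanRadius Z) :
    fussCatalanSeries Z x = 1 + x * fussCatalanSeries Z x ^ (Z + 1) := by
  have hG := continuousOn_fussCatalanSeries hZ
  refine Set.EqOn.of_subset_closure (s := Set.Ico 0 (fussCatalanRadius Z))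
    (fun y hy => fussCatalanSeries_eq_one_add_mul_pow_of_abs_lt Z
      (by rw [abs_of_nonneg hy.1]; exact hy.2))
    hG (continuousOn_const.add (continuousOn_id.mul (hG.pow _))) Set.Ico_subset_Icc_self
    (by rw [closure_Ico (fussCatalanRadius_pos Z).ne]) ⟨hx0, hx⟩

end Boundary

theorem stmt_10 (Z : ℕ) (hZ : 1 ≤ Z) (r ε u0 θ U : ℝ)
    (hr0 : 0 ≤ r) (hr1 : r < 1) (hε : 0 ≤ ε) (hu0 : 0 ≤ u0)
    (hθdef : θ = r * ε * u0 ^ Z / (1 - r) ^ (Z + 1))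
    (hθ : θ ≤ (Z : ℝ) ^ Z / ((Z : ℝ) + 1) ^ (Z + 1))
    (hU : U = (u0 / (1 - r)) *
      ∑' i : ℕ, ((Nat.choose ((Z + 1) * i) i : ℝ) / ((Z : ℝ) * i + 1)) * θ ^ i) :
    U = u0 + r * (1 + ε * U ^ Z) * U := by
  have hr : 0 < 1 - r := by linarith
  have hθ0 : 0 ≤ θ := hθdef ▸ by positivity
  have hB := fussCatalanSeries_eq_one_add_mul_pow hZ hθ0 hθ
  set B := fussCatalanSeries Z θ
  set v := u0 / (1 - r)
  have hv : (1 - r) * v = u0 := mul_div_cancel₀ u0 hr.ne'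
  have hθv : (1 - r) * v * θ = r * ε * v ^ (Z + 1) := by
    rw [hθdef, div_pow, pow_succ, hv]
    field_simp
    ring
  rw [show U = v * B from hU]
  linear_combination (1 - r) * v * hB + B ^ (Z + 1) * hθv + hv
end
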